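/- arXiv:2403.13059 — 3 statements merged into one kernel-verified Lean document; each statement's English description precedes it below -/
import Mathlib

section
/- Let Ω ⊂ ℝⁿ be open, γ ∈ (0,2), β := 2/(2−γ), and α := 2γ/(2−γ). Let u : Ω → (0,∞) be twice continuously differentiable and satisfy Δu = (γ/2) u^{γ−1} on Ω. Then v := β u^{1/β} is twice continuously differentiable and satisfies ∇v = u^{−γ/2} ∇u and Δv = (α/2) (1 − |∇v|²)/v on Ω. -/
/-!
With `g t = β t^{1/β}` one has `g' t = t^{-γ/2}` and `g'' t = -(γ/2) t^{-γ/2-1}`, so the chain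
rule `Δ(g ∘ u) = g'(u) Δu + g''(u) |∇u|²` and the equation for `u` give
`Δv = (γ/2) u^{γ/2-1} - (γ/2) u^{-γ/2-1} |∇u|²`. Since `|∇v|² = u^{-γ} |∇u|²` and
`v = β u^{1-γ/2}`, this is exactly `(α/2)(1 - |∇v|²)/v`, because `α = γβ`.
-/

/-- The Laplacian of a function on `ℝⁿ`, as the sum of its pure second
partial derivatives. -/
noncomputable def lap {n : ℕ} (f : EuclideanSpace ℝ (Fin n) → ℝ)
    (x : EuclideanSpace ℝ (Fin n)) : ℝ :=
  ∑ i : Fin n, fderiv ℝ (fun y => fderiv ℝ f y (EuclideanSpace.single i 1)) x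
    (EuclideanSpace.single i 1)

open Filter Topology

theorem hasDerivAt_mul_rpow_one_div {β t : ℝ} (hβ : β ≠ 0) (ht : t ≠ 0) :
    HasDerivAt (fun s => β * s ^ (1 / β)) (t ^ (1 / β - 1)) t := by
  simpa [← mul_assoc, hβ] using (Real.hasDerivAt_rpow_const (p := 1 / β) (Or.inl ht)).const_mul β

theorem gradient_comp_of_hasDerivAt {F : Type*} [NormedAddCommGroup F] [InnerProductSpace ℝ F]
    [CompleteSpace F] {u : F → ℝ} {g : ℝ → ℝ} {g' : ℝ} {x : F}
    (hg : HasDerivAt g g' (u x)) (hu : DifferentiableAt ℝ u x) :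
    gradient (fun y => g (u y)) x = g' • gradient u x := by
  have hcomp : HasFDerivAt (fun y => g (u y)) (g' • fderiv ℝ u x) x :=
    hg.comp_hasFDerivAt x hu.hasFDerivAt
  rw [gradient, hcomp.fderiv, map_smul, gradient]

theorem fderiv_fderiv_apply_comp {E : Type*} [NormedAddCommGroup E] [NormedSpace ℝ E]
    {u : E → ℝ} {x : E} (hu : ContDiffAt ℝ 2 u x) {g g' : ℝ → ℝ} {g'' : ℝ}
    (hg : ∀ᶠ t in 𝓝 (u x), HasDerivAt g (g' t) t) (hg' : HasDerivAt g' g'' (u x)) (e : E) :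
    fderiv ℝ (fun y => fderiv ℝ (fun z => g (u z)) y e) x e
      = g' (u x) * fderiv ℝ (fun y => fderiv ℝ u y e) x e + g'' * fderiv ℝ u x e ^ 2 := by
  have hnear : ∀ᶠ y in 𝓝 x, HasDerivAt g (g' (u y)) (u y) ∧ DifferentiableAt ℝ u y :=
    (hu.continuousAt.eventually hg).and <|
      (hu.eventually (by simp)).mono fun y hy => hy.differentiableAt two_ne_zero
  have hfirst : (fun y => fderiv ℝ (fun z => g (u z)) y e)
      =ᶠ[𝓝 x] fun y => g' (u y) * fderiv ℝ u y e := by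
    filter_upwards [hnear] with y ⟨hgy, huy⟩
    have hcomp : HasFDerivAt (fun z => g (u z)) (g' (u y) • fderiv ℝ u y) y :=
      hgy.comp_hasFDerivAt y huy.hasFDerivAt
    rw [hcomp.fderiv, smul_apply, smul_eq_mul]
  have hdu : HasFDerivAt u (fderiv ℝ u x) x := (hu.differentiableAt two_ne_zero).hasFDerivAt
  have hd2u : DifferentiableAt ℝ (fun y => fderiv ℝ u y e) x :=
    ((hu.fderiv_right le_rfl).differentiableAt one_ne_zero).clm_apply (differentiableAt_const e)
  have hprod : HasFDerivAt (fun y => g' (u y) * fderiv ℝ u y e)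
      (g' (u x) • fderiv ℝ (fun y => fderiv ℝ u y e) x
        + fderiv ℝ u x e • g'' • fderiv ℝ u x) x :=
    (hg'.comp_hasFDerivAt x hdu).mul hd2u.hasFDerivAt
  rw [hfirst.fderiv_eq, hprod.fderiv]
  simp only [add_apply, smul_apply, smul_eq_mul]
  ring

theorem sum_fderiv_single_sq_eq_norm_gradient_sq {n : ℕ} (f : EuclideanSpace ℝ (Fin n) → ℝ)
    (x : EuclideanSpace ℝ (Fin n)) :
    ∑ i, fderiv ℝ f x (EuclideanSpace.single i 1) ^ 2 = ‖gradient f x‖ ^ 2 := by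
  have hcoord : ∀ i, fderiv ℝ f x (EuclideanSpace.single i 1) = gradient f x i := by
    intro i
    rw [← toDual_gradient, InnerProductSpace.toDual_apply_apply, EuclideanSpace.inner_single_right]
    simp
  simp_rw [hcoord, EuclideanSpace.norm_sq_eq, Real.norm_eq_abs, sq_abs]

theorem lap_comp {n : ℕ} {u : EuclideanSpace ℝ (Fin n) → ℝ} {x : EuclideanSpace ℝ (Fin n)}
    (hu : ContDiffAt ℝ 2 u x) {g g' : ℝ → ℝ} {g'' : ℝ}
    (hg : ∀ᶠ t in 𝓝 (u x), HasDerivAt g (g' t) t) (hg' : HasDerivAt g' g'' (u x)) :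
    lap (fun y => g (u y)) x = g' (u x) * lap u x + g'' * ‖gradient u x‖ ^ 2 := by
  simp only [lap, fderiv_fderiv_apply_comp hu hg hg', Finset.sum_add_distrib, ← Finset.mul_sum,
    sum_fderiv_single_sq_eq_norm_gradient_sq]

theorem altPhillips_identity {γ β α t G : ℝ} (hγ : γ ≠ 2) (hβ : β = 2 / (2 - γ))
    (hα : α = 2 * γ / (2 - γ)) (ht : 0 < t) :
    t ^ (-(γ / 2)) * ((γ / 2) * t ^ (γ - 1)) + (-(γ / 2) * t ^ (-(γ / 2) - 1)) * G
      = (α / 2) * ((1 - (t ^ (-(γ / 2))) ^ 2 * G) / (β * t ^ (1 / β))) := by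
  have hβ0 : β ≠ 0 := by rw [hβ]; exact div_ne_zero two_ne_zero (sub_ne_zero.mpr hγ.symm)
  have hαβ : α = γ * β := by rw [hα, hβ]; ring
  have hpow_γ : t ^ (γ - 1) = t ^ γ / t := by rw [Real.rpow_sub ht, Real.rpow_one]
  have hpow_sub : t ^ (-(γ / 2) - 1) = t ^ (-(γ / 2)) / t := by rw [Real.rpow_sub ht, Real.rpow_one]
  have hpow_β : t ^ (1 / β) = t ^ (-(γ / 2)) * t := by
    rw [← Real.rpow_add_one ht.ne', hβ, one_div_div]
    congr 1
    field_simp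
    ring
  have hcancel : (t ^ (-(γ / 2))) ^ 2 * t ^ γ = 1 := by
    rw [sq, ← Real.rpow_add ht, ← Real.rpow_add ht, show -(γ / 2) + -(γ / 2) + γ = 0 by ring,
      Real.rpow_zero]
  rw [hpow_γ, hpow_sub, hpow_β, hαβ]
  field_simp
  linear_combination γ * hcancel

/-- If `u > 0` solves `Δu = (γ/2) u^{γ−1}` on `Ω`, then `v := β u^{1/β}` (with
`β = 2/(2−γ)`, `α = 2γ/(2−γ)`) is `C²` and satisfies `∇v = u^{−γ/2} ∇u` and
`Δv = (α/2)(1 − |∇v|²)/v` on `Ω`. -/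
theorem modified_equation_of_altPhillips {n : ℕ}
    (Ω : Set (EuclideanSpace ℝ (Fin n))) (hΩ : IsOpen Ω)
    (γ β α : ℝ) (hγ : γ ∈ Set.Ioo (0 : ℝ) 2) (hβ : β = 2 / (2 - γ))
    (hα : α = 2 * γ / (2 - γ))
    (u : EuclideanSpace ℝ (Fin n) → ℝ) (hupos : ∀ x ∈ Ω, 0 < u x)
    (hu : ContDiffOn ℝ 2 u Ω)
    (hPDE : ∀ x ∈ Ω, lap u x = (γ / 2) * u x ^ (γ - 1))
    (v : EuclideanSpace ℝ (Fin n) → ℝ) (hv : v = fun x => β * u x ^ (1 / β)) :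
    ContDiffOn ℝ 2 v Ω ∧ ∀ x ∈ Ω,
      gradient v x = (u x ^ (-(γ / 2))) • gradient u x ∧
      lap v x = (α / 2) * ((1 - ‖gradient v x‖ ^ 2) / v x) := by
  have hγ2 : γ ≠ 2 := hγ.2.ne
  have hβ0 : β ≠ 0 := by rw [hβ]; exact div_ne_zero two_ne_zero (sub_ne_zero.mpr hγ2.symm)
  have hexp : 1 / β - 1 = -(γ / 2) := by rw [hβ, one_div_div]; field_simp; ring
  have hg : ∀ t : ℝ, 0 < t → HasDerivAt (fun s => β * s ^ (1 / β)) (t ^ (-(γ / 2))) t :=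
    fun t ht => hexp ▸ hasDerivAt_mul_rpow_one_div hβ0 ht.ne'
  have hux : ∀ x ∈ Ω, ContDiffAt ℝ 2 u x := fun x hx => hu.contDiffAt (hΩ.mem_nhds hx)
  subst hv
  refine ⟨fun x hx => (contDiffAt_const.mul ((hux x hx).rpow_const_of_ne
    (hupos x hx).ne')).contDiffWithinAt, fun x hx => ?_⟩
  have hgrad := gradient_comp_of_hasDerivAt (hg _ (hupos x hx))
    ((hux x hx).differentiableAt two_ne_zero)
  refine ⟨hgrad, ?_⟩
  rw [lap_comp (hux x hx) ((eventually_gt_nhds (hupos x hx)).mono hg)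
      (Real.hasDerivAt_rpow_const (Or.inl (hupos x hx).ne')), hPDE x hx, hgrad, norm_smul,
    mul_pow, Real.norm_eq_abs, sq_abs]
  exact altPhillips_identity hγ2 hβ hα (hupos x hx)
end

section
/- Let Ω ⊂ ℝⁿ be open, v ∈ C³(Ω), ξ ∈ C¹(Ω), and set Φ := ξ ∇v. Then on Ω: (div Φ)² − Tr((DΦ)²) = div[ ξ² ( Δv ∇v − (1/2) ∇(|∇v|²) ) ]. -/
/-- The partial derivative `∂_i f` of a function on `ℝⁿ`. -/
noncomputable def pd {n : ℕ} (i : Fin n) (f : (Fin n → ℝ) → ℝ) (x : Fin n → ℝ) : ℝ :=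
  fderiv ℝ f x (Pi.single i 1)

/-- The gradient `∇f` of a function on `ℝⁿ`, in coordinates. -/
noncomputable def gradv {n : ℕ} (f : (Fin n → ℝ) → ℝ) (x : Fin n → ℝ) : Fin n → ℝ :=
  fun i => pd i f x

/-- The divergence `div F = ∑ᵢ ∂_i F^i` of a vector field on `ℝⁿ`. -/
noncomputable def vdiv {n : ℕ} (F : (Fin n → ℝ) → (Fin n → ℝ)) (x : Fin n → ℝ) : ℝ :=
  ∑ i : Fin n, pd i (fun y => F y i) x

/-- The squared norm of the gradient, `|∇f|² = ∑ᵢ (∂_i f)²`. -/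
noncomputable def nsq {n : ℕ} (f : (Fin n → ℝ) → ℝ) (x : Fin n → ℝ) : ℝ :=
  ∑ i : Fin n, (pd i f x) ^ 2

/-- The Laplacian `Δf = ∑ᵢ ∂_{ii} f`. -/
noncomputable def lapp {n : ℕ} (f : (Fin n → ℝ) → ℝ) (x : Fin n → ℝ) : ℝ :=
  ∑ i : Fin n, pd i (fun y => pd i f y) x

/-!
At a point write `a = ∇ξ`, `u = ∇v`, `s = ξ` and `W = D²v`. Then `DΦ = u aᵀ + s W`, and
since `W` is symmetric,
`(div Φ)² - Tr((DΦ)²) = 2 s a·(tr W u - W u) + s² ((tr W)² - |W|²)`.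
On the other side `½ ∇|∇v|² = D²v ∇v`, so the field is `ξ² G` with `G = Δv ∇v - D²v ∇v`;
`div G = (Δv)² - |D²v|²` because the third-order terms `∇v·∇Δv` cancel by the symmetry of
third derivatives, and `div (ξ² G) = 2 ξ ∇ξ·G + ξ² div G` is the same expression.
Pointwise `ξ² G = (div Φ) Φ - DΦ Φ`, but `Φ` is only `C¹`, so the null-Lagrangian identity
for `Φ` itself is not available and the two sides are computed separately.
-/

open Filter Topology

section PartialDerivatives

variable {n : ℕ} {f g : (Fin n → ℝ) → ℝ} {x : Fin n → ℝ} {i j : Fin n}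

lemma Filter.EventuallyEq.pd_eq (h : f =ᶠ[𝓝 x] g) : pd i f x = pd i g x := by
  rw [pd, pd, h.fderiv_eq]

lemma pd_mul (hf : DifferentiableAt ℝ f x) (hg : DifferentiableAt ℝ g x) :
    pd i (fun y => f y * g y) x = pd i f x * g x + f x * pd i g x := by
  simp only [pd, fderiv_fun_mul hf hg, add_apply, smul_apply, smul_eq_mul]
  ring

lemma pd_sub (hf : DifferentiableAt ℝ f x) (hg : DifferentiableAt ℝ g x) :
    pd i (fun y => f y - g y) x = pd i f x - pd i g x := by
  simp only [pd, fderiv_fun_sub hf hg, sub_apply]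

lemma pd_sum {ι : Type*} {s : Finset ι} {F : ι → (Fin n → ℝ) → ℝ}
    (h : ∀ k ∈ s, DifferentiableAt ℝ (F k) x) :
    pd i (fun y => ∑ k ∈ s, F k y) x = ∑ k ∈ s, pd i (F k) x := by
  simp only [pd, fderiv_fun_sum h, FunLike.coe_sum, Finset.sum_apply]

lemma pd_sq (hf : DifferentiableAt ℝ f x) :
    pd i (fun y => f y ^ 2) x = 2 * f x * pd i f x := by
  simp only [sq, pd_mul hf hf]
  ring

lemma contDiffAt_pd {m k : WithTop ℕ∞} (hf : ContDiffAt ℝ k f x) (hk : m + 1 ≤ k) :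
    ContDiffAt ℝ m (pd i f) x :=
  (hf.fderiv_right hk).clm_apply contDiffAt_const

lemma differentiableAt_pd {k : WithTop ℕ∞} (hf : ContDiffAt ℝ k f x) (hk : 2 ≤ k) :
    DifferentiableAt ℝ (pd i f) x :=
  (contDiffAt_pd (m := 1) hf (by simpa [one_add_one_eq_two] using hk)).differentiableAt one_ne_zero

lemma pd_comm (hf : ContDiffAt ℝ 2 f x) : pd i (pd j f) x = pd j (pd i f) x := by
  have hdiff : DifferentiableAt ℝ (fderiv ℝ f) x :=
    (hf.fderiv_right (m := 1) (by norm_num)).differentiableAt one_ne_zero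
  have hsnd (a b : Fin n) :
      pd a (pd b f) x = fderiv ℝ (fderiv ℝ f) x (Pi.single a 1) (Pi.single b 1) := by
    unfold pd
    rw [fderiv_clm_apply hdiff (differentiableAt_const _)]
    simp
  rw [hsnd, hsnd]
  exact hf.isSymmSndFDerivAt (by simp) _ _

lemma pd_pd_pd_comm (hf : ContDiffAt ℝ 3 f x) :
    pd i (pd j (pd j f)) x = pd j (pd j (pd i f)) x := by
  have hf2 : ∀ᶠ y in 𝓝 x, ContDiffAt ℝ 2 f y :=
    (hf.of_le (by norm_num)).eventually (by simp)
  calc pd i (pd j (pd j f)) x = pd j (pd i (pd j f)) x := pd_comm (contDiffAt_pd hf (by norm_num))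
    _ = pd j (pd j (pd i f)) x := EventuallyEq.pd_eq <| hf2.mono fun y hy => pd_comm hy

end PartialDerivatives

section VectorFields

variable {n : ℕ} {f : (Fin n → ℝ) → ℝ} {x : Fin n → ℝ} {j : Fin n}

lemma pd_nsq (hf : ∀ k, DifferentiableAt ℝ (pd k f) x) :
    pd j (nsq f) x = 2 * ∑ k, pd k f x * pd j (pd k f) x := by
  change pd j (fun y => ∑ k, pd k f y ^ 2) x = _
  rw [pd_sum fun k _ => (hf k).fun_pow 2, Finset.mul_sum]
  exact Finset.sum_congr rfl fun k _ => by rw [pd_sq (hf k)]; ring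

lemma vdiv_smul {F : (Fin n → ℝ) → Fin n → ℝ} (hf : DifferentiableAt ℝ f x)
    (hF : ∀ i, DifferentiableAt ℝ (fun y => F y i) x) :
    vdiv (fun y => f y • F y) x = ∑ i, pd i f x * F x i + f x * vdiv F x := by
  simp only [vdiv, Pi.smul_apply, smul_eq_mul, Finset.mul_sum, ← Finset.sum_add_distrib]
  exact Finset.sum_congr rfl fun i _ => pd_mul hf (hF i)

lemma lapp_smul_gradv_sub_apply (hf : ∀ k, DifferentiableAt ℝ (pd k f) x) :
    (lapp f x • gradv f x - (1 / 2 : ℝ) • gradv (nsq f) x) j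
      = lapp f x * pd j f x - ∑ k, pd k f x * pd j (pd k f) x := by
  simp only [Pi.sub_apply, Pi.smul_apply, smul_eq_mul, gradv, pd_nsq hf]
  ring

lemma lapp_smul_gradv_sub_apply_eventuallyEq (hf : ContDiffAt ℝ 2 f x) :
    (fun y => (lapp f y • gradv f y - (1 / 2 : ℝ) • gradv (nsq f) y) j)
      =ᶠ[𝓝 x] fun y => lapp f y * pd j f y - ∑ k, pd k f y * pd j (pd k f) y :=
  (hf.eventually (by simp)).mono fun _ hy => lapp_smul_gradv_sub_apply fun _ =>
    differentiableAt_pd hy le_rfl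

lemma differentiableAt_pd_pd (hf : ContDiffAt ℝ 3 f x) {k l : Fin n} :
    DifferentiableAt ℝ (pd l (pd k f)) x :=
  differentiableAt_pd (contDiffAt_pd (m := 2) hf (by norm_num)) le_rfl

lemma differentiableAt_lapp (hf : ContDiffAt ℝ 3 f x) : DifferentiableAt ℝ (lapp f) x :=
  DifferentiableAt.fun_sum fun _ _ => differentiableAt_pd_pd hf

lemma differentiableAt_lapp_smul_gradv_sub_apply (hf : ContDiffAt ℝ 3 f x) :
    DifferentiableAt ℝ
      (fun y => (lapp f y • gradv f y - (1 / 2 : ℝ) • gradv (nsq f) y) j) x :=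
  (((differentiableAt_lapp hf).fun_mul (differentiableAt_pd hf (by norm_num))).fun_sub
    (DifferentiableAt.fun_sum fun _ _ => (differentiableAt_pd hf (by norm_num)).fun_mul
      (differentiableAt_pd_pd hf))).congr_of_eventuallyEq
    (lapp_smul_gradv_sub_apply_eventuallyEq (hf.of_le (by norm_num)))

lemma vdiv_lapp_smul_gradv_sub (hf : ContDiffAt ℝ 3 f x) :
    vdiv (fun y => lapp f y • gradv f y - (1 / 2 : ℝ) • gradv (nsq f) y) x
      = lapp f x ^ 2 - ∑ j, ∑ k, pd j (pd k f) x ^ 2 := by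
  have d1 (k) : DifferentiableAt ℝ (pd k f) x := differentiableAt_pd hf (by norm_num)
  have d2 (k l) : DifferentiableAt ℝ (pd l (pd k f)) x := differentiableAt_pd_pd hf
  have dlapp : DifferentiableAt ℝ (lapp f) x := differentiableAt_lapp hf
  have pd_lapp (j) : pd j (lapp f) x = ∑ i, pd i (pd i (pd j f)) x := by
    change pd j (fun y => ∑ i, pd i (pd i f) y) x = _
    rw [pd_sum fun i _ => d2 i i]
    exact Finset.sum_congr rfl fun i _ => pd_pd_pd_comm hf
  have pd_apply (j) :
      pd j (fun y => (lapp f y • gradv f y - (1 / 2 : ℝ) • gradv (nsq f) y) j) x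
        = pd j (lapp f) x * pd j f x + lapp f x * pd j (pd j f) x
          - ∑ k, (pd j (pd k f) x * pd j (pd k f) x + pd k f x * pd j (pd j (pd k f)) x) := by
    rw [(lapp_smul_gradv_sub_apply_eventuallyEq (hf.of_le (by norm_num))).pd_eq,
      pd_sub (dlapp.fun_mul (d1 j)) (DifferentiableAt.fun_sum fun k _ => (d1 k).fun_mul (d2 k j)),
      pd_mul dlapp (d1 j), pd_sum fun k _ => (d1 k).fun_mul (d2 k j)]
    simp only [pd_mul (d1 _) (d2 _ _)]
  have third_order_terms : ∑ j, (∑ i, pd i (pd i (pd j f)) x) * pd j f x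
      = ∑ j, ∑ k, pd k f x * pd j (pd j (pd k f)) x := by
    simp only [Finset.sum_mul]
    rw [Finset.sum_comm]
    simp only [mul_comm]
  have lapp_sq : ∑ j, lapp f x * pd j (pd j f) x = lapp f x ^ 2 := by
    rw [← Finset.mul_sum, sq]
    rfl
  simp only [vdiv, pd_apply, pd_lapp, Finset.sum_sub_distrib, Finset.sum_add_distrib,
    third_order_terms, lapp_sq, sq]
  ring

end VectorFields

lemma sum_sum_eq_of_add_swap {ι M : Type*} [AddCommMonoid M] [IsAddTorsionFree M]
    (s : Finset ι) {F G : ι → ι → M}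
    (h : ∀ i ∈ s, ∀ j ∈ s, F i j + F j i = G i j + G j i) :
    ∑ i ∈ s, ∑ j ∈ s, F i j = ∑ i ∈ s, ∑ j ∈ s, G i j := by
  have symm_add (H : ι → ι → M) :
      2 • ∑ i ∈ s, ∑ j ∈ s, H i j = ∑ i ∈ s, ∑ j ∈ s, (H i j + H j i) := by
    simp only [two_nsmul, Finset.sum_add_distrib]
    rw [Finset.sum_comm (f := fun i j => H j i)]
  apply nsmul_right_injective two_ne_zero
  simp only [symm_add]
  exact Finset.sum_congr rfl fun i hi => Finset.sum_congr rfl fun j hj => h i hi j hj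

/-- With `M i j = u i * a j + s * W i j` (the Jacobian `D(ξ ∇v)` at a point, for `a = ∇ξ`,
`u = ∇v`, `s = ξ`, `W` the Hessian), the left side is `(tr M)² - tr (M²)`. -/
lemma sq_trace_sub_trace_sq_rankOne_add_smul {ι R : Type*} [Fintype ι] [CommRing R]
    [IsAddTorsionFree R] (a u : ι → R) (s : R) (W : ι → ι → R) (hW : ∀ i j, W i j = W j i) :
    (∑ i, (a i * u i + s * W i i)) ^ 2
        - ∑ i, ∑ j, (a j * u i + s * W i j) * (a i * u j + s * W j i)
      = ∑ i, 2 * s * a i * ((∑ l, W l l) * u i - ∑ k, u k * W k i)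
        + s ^ 2 * ((∑ l, W l l) ^ 2 - ∑ j, ∑ k, W k j ^ 2) := by
  have lhs : (∑ i, (a i * u i + s * W i i)) ^ 2
        - ∑ i, ∑ j, (a j * u i + s * W i j) * (a i * u j + s * W j i)
      = ∑ i, ∑ j, ((a i * u i + s * W i i) * (a j * u j + s * W j j)
        - (a j * u i + s * W i j) * (a i * u j + s * W j i)) := by
    simp only [sq, Finset.sum_mul_sum, Finset.sum_sub_distrib]
  have rhs : ∑ i, 2 * s * a i * ((∑ l, W l l) * u i - ∑ k, u k * W k i)
        + s ^ 2 * ((∑ l, W l l) ^ 2 - ∑ j, ∑ k, W k j ^ 2)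
      = ∑ i, ∑ j, (2 * s * a i * (W j j * u i - u j * W j i)
        + s ^ 2 * (W j j * W i i - W j i ^ 2)) := by
    simp only [Finset.sum_add_distrib, Finset.mul_sum, Finset.sum_mul, mul_sub,
      Finset.sum_sub_distrib, sq]
  rw [lhs, rhs]
  refine sum_sum_eq_of_add_swap _ fun i _ j _ => ?_
  rw [hW i j]
  ring

/-- For `v ∈ C³(Ω)`, `ξ ∈ C¹(Ω)` and `Φ := ξ ∇v`, on `Ω` one has
`(div Φ)² − Tr((DΦ)²) = div[ ξ² ( Δv ∇v − ½ ∇(|∇v|²) ) ]`. -/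
theorem div_sq_sub_trace_sq_eq_div {n : ℕ} (Ω : Set (Fin n → ℝ)) (hΩ : IsOpen Ω)
    (v ξ : (Fin n → ℝ) → ℝ) (hv : ContDiffOn ℝ 3 v Ω) (hξ : ContDiffOn ℝ 1 ξ Ω)
    (Φ : (Fin n → ℝ) → (Fin n → ℝ)) (hΦ : Φ = fun x => ξ x • gradv v x) :
    ∀ x ∈ Ω,
      (vdiv Φ x) ^ 2 - ∑ i : Fin n, ∑ j : Fin n,
          pd j (fun y => Φ y i) x * pd i (fun y => Φ y j) x
        = vdiv (fun y => (ξ y) ^ 2 •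
            (lapp v y • gradv v y - (1 / 2 : ℝ) • gradv (nsq v) y)) x := by
  subst hΦ
  intro x hx
  have hv3 : ContDiffAt ℝ 3 v x := hv.contDiffAt (hΩ.mem_nhds hx)
  have hξ1 : DifferentiableAt ℝ ξ x :=
    (hξ.contDiffAt (hΩ.mem_nhds hx)).differentiableAt one_ne_zero
  have hdv (i : Fin n) : DifferentiableAt ℝ (pd i v) x := differentiableAt_pd hv3 (by norm_num)
  have DΦ (i j : Fin n) : pd j (fun y => (ξ y • gradv v y) i) x
      = pd j ξ x * pd i v x + ξ x * pd j (pd i v) x :=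
    pd_mul hξ1 (hdv i)
  rw [vdiv_smul (hξ1.fun_pow 2) fun _ => differentiableAt_lapp_smul_gradv_sub_apply hv3,
    vdiv_lapp_smul_gradv_sub hv3]
  simp only [vdiv, DΦ, pd_sq hξ1, lapp_smul_gradv_sub_apply hdv]
  exact sq_trace_sub_trace_sq_rankOne_add_smul (fun i => pd i ξ x) (fun i => pd i v x) (ξ x)
    (fun i j => pd j (pd i v) x) fun i j => pd_comm (hv3.of_le (by norm_num))
end

section
/- Let α ≥ 0, let ν ∈ ℝⁿ be a unit vector, x₀ ∈ ℝⁿ, and let v be twice continuously differentiable on an open neighborhood U of x₀ with v(x₀) = 0 and ∇v(x₀) = −ν. Suppose there is t₀ > 0 such that for every t ∈ (0, t₀): x₀ − tν ∈ U, v(x₀ − tν) > 0, and Δv(x₀ − tν) = (α/2) (1 − |∇v(x₀ − tν)|²) / v(x₀ − tν). Then lim_{t → 0⁺} Δv(x₀ − tν) = −α ⟨ν, D²v(x₀) ν⟩. -/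
/-!
Along the inward normal ray, `v (x₀ - t • ν) = t + o(t)` because `∇v(x₀) = -ν` is a unit
vector, and `1 - ‖∇v (x₀ - t • ν)‖² = -2 t v_νν(x₀) + o(t)` by differentiating `‖∇v‖²` along
the ray. The quotient in the equation is therefore a `0/0` form whose limit is the ratio
`-2 v_νν(x₀)` of the two derivatives.
-/

open Topology

open Filter InnerProductSpace

theorem tendsto_div_of_hasDerivAt_of_eq_zero {f g : ℝ → ℝ} {f' g' x : ℝ}
    (hf : HasDerivAt f f' x) (hg : HasDerivAt g g' x) (hfx : f x = 0) (hgx : g x = 0)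
    (hg' : g' ≠ 0) : Tendsto (fun t => f t / g t) (𝓝[≠] x) (𝓝 (f' / g')) := by
  refine ((hasDerivAt_iff_tendsto_slope.mp hf).div (hasDerivAt_iff_tendsto_slope.mp hg)
    hg').congr' ?_
  filter_upwards [self_mem_nhdsWithin] with t ht
  rw [Pi.div_apply, slope_def_field, slope_def_field, hfx, hgx, sub_zero, sub_zero,
    div_div_div_cancel_right₀ (sub_ne_zero.mpr ht)]

theorem HasFDerivAt.hasDerivAt_comp_sub_smul {E F : Type*} [NormedAddCommGroup E]
    [NormedSpace ℝ E] [NormedAddCommGroup F] [NormedSpace ℝ F] {f : E → F} {f' : E →L[ℝ] F}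
    {x : E} (hf : HasFDerivAt f f' x) (w : E) :
    HasDerivAt (fun t : ℝ => f (x - t • w)) (-f' w) 0 := by
  have hline : HasDerivAt (fun t : ℝ => x - t • w) (-w) 0 := by
    simpa using ((hasDerivAt_id (0 : ℝ)).smul_const w).const_sub x
  have hf₀ : HasFDerivAt f f' (x - (0 : ℝ) • w) := by simpa using hf
  simpa [Function.comp_def] using hf₀.comp_hasDerivAt 0 hline

theorem hasDerivAt_norm_sq_gradient_comp_sub_smul {E : Type*} [NormedAddCommGroup E]
    [InnerProductSpace ℝ E] [CompleteSpace E] {v : E → ℝ}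
    {D : E →L[ℝ] E →L[ℝ] ℝ} {x : E} (hD : HasFDerivAt (fderiv ℝ v) D x) (w : E) :
    HasDerivAt (fun t : ℝ => ‖gradient v (x - t • w)‖ ^ 2) (-(2 * D w (gradient v x))) 0 := by
  have hG : HasDerivAt (fun t : ℝ => gradient v (x - t • w)) ((toDual ℝ E).symm (-D w)) 0 :=
    ((toDual ℝ E).symm.toContinuousLinearEquiv.toContinuousLinearMap.hasFDerivAt.comp_hasDerivAt
      0 (hD.hasDerivAt_comp_sub_smul w))
  convert hG.norm_sq using 1
  rw [zero_smul, sub_zero, real_inner_comm, toDual_symm_apply, neg_apply]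
  ring

theorem laplacian_limit_at_free_boundary_general {n : ℕ} (α : ℝ)
    (ν x₀ : EuclideanSpace ℝ (Fin n)) (hν : ‖ν‖ = 1)
    (U : Set (EuclideanSpace ℝ (Fin n))) (hU : IsOpen U) (hx₀ : x₀ ∈ U)
    (v : EuclideanSpace ℝ (Fin n) → ℝ) (hv : ContDiffOn ℝ 2 v U)
    (hv0 : v x₀ = 0) (hgrad : gradient v x₀ = -ν)
    (t₀ : ℝ) (ht₀ : 0 < t₀)
    (h : ∀ t ∈ Set.Ioo (0 : ℝ) t₀,
      x₀ - t • ν ∈ U ∧ 0 < v (x₀ - t • ν) ∧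
      lap v (x₀ - t • ν) =
        (α / 2) * ((1 - ‖gradient v (x₀ - t • ν)‖ ^ 2) / v (x₀ - t • ν))) :
    Filter.Tendsto (fun t : ℝ => lap v (x₀ - t • ν)) (𝓝[>] (0 : ℝ))
      (𝓝 (-α * fderiv ℝ (fun y => fderiv ℝ v y ν) x₀ ν)) := by
  have hvx : ContDiffAt ℝ 2 v x₀ := hv.contDiffAt (hU.mem_nhds hx₀)
  have hD : DifferentiableAt ℝ (fderiv ℝ v) x₀ :=
    (hvx.fderiv_right one_add_one_eq_two.le).differentiableAt one_ne_zero
  have hvνν : fderiv ℝ (fun y => fderiv ℝ v y ν) x₀ ν = fderiv ℝ (fderiv ℝ v) x₀ ν ν := by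
    simp [fderiv_clm_apply hD (differentiableAt_const ν)]
  have hv' : HasDerivAt (fun t : ℝ => v (x₀ - t • ν)) 1 0 := by
    refine (hvx.differentiableAt two_ne_zero).hasFDerivAt.hasDerivAt_comp_sub_smul ν
      |>.congr_deriv ?_
    rw [← inner_gradient_left, hgrad, inner_neg_left, neg_neg, real_inner_self_eq_norm_sq, hν,
      one_pow]
  have hq' : HasDerivAt (fun t : ℝ => 1 - ‖gradient v (x₀ - t • ν)‖ ^ 2)
      (-(2 * fderiv ℝ (fun y => fderiv ℝ v y ν) x₀ ν)) 0 := by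
    refine (hasDerivAt_norm_sq_gradient_comp_sub_smul hD.hasFDerivAt ν).const_sub 1
      |>.congr_deriv ?_
    rw [hvνν, hgrad, map_neg]
    ring
  have hratio := tendsto_div_of_hasDerivAt_of_eq_zero hq' hv' (by simp [hgrad, hν])
    (by simpa using hv0) one_ne_zero
  convert ((hratio.mono_left (nhdsGT_le_nhdsNE 0)).const_mul (α / 2)).congr' ?_ using 2
  · ring
  filter_upwards [Ioo_mem_nhdsGT ht₀] with t ht
  exact (h t ht).2.2.symm

/-- If `v` is `C²` near a free boundary point `x₀` with `v(x₀) = 0`, `∇v(x₀) = −ν`,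
`|ν| = 1`, and `v` solves `Δv = (α/2)(1 − |∇v|²)/v` on the inward normal segment
`{x₀ − tν : 0 < t < t₀}` where `v > 0`, then `Δv(x₀ − tν) → −α v_{νν}(x₀)` as `t → 0⁺`. -/
theorem laplacian_limit_at_free_boundary {n : ℕ} (α : ℝ) (hα : 0 ≤ α)
    (ν x₀ : EuclideanSpace ℝ (Fin n)) (hν : ‖ν‖ = 1)
    (U : Set (EuclideanSpace ℝ (Fin n))) (hU : IsOpen U) (hx₀ : x₀ ∈ U)
    (v : EuclideanSpace ℝ (Fin n) → ℝ) (hv : ContDiffOn ℝ 2 v U)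
    (hv0 : v x₀ = 0) (hgrad : gradient v x₀ = -ν)
    (t₀ : ℝ) (ht₀ : 0 < t₀)
    (h : ∀ t ∈ Set.Ioo (0 : ℝ) t₀,
      x₀ - t • ν ∈ U ∧ 0 < v (x₀ - t • ν) ∧
      lap v (x₀ - t • ν) =
        (α / 2) * ((1 - ‖gradient v (x₀ - t • ν)‖ ^ 2) / v (x₀ - t • ν))) :
    Filter.Tendsto (fun t : ℝ => lap v (x₀ - t • ν)) (𝓝[>] (0 : ℝ))
      (𝓝 (-α * fderiv ℝ (fun y => fderiv ℝ v y ν) x₀ ν)) :=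
  laplacian_limit_at_free_boundary_general α ν x₀ hν U hU hx₀ v hv hv0 hgrad t₀ ht₀ h
end
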